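/- arXiv:2112.06997 — 4 statements merged into one kernel-verified Lean document; each statement's English description precedes it below -/
import Mathlib

section
/- For all x ∈ ℝ and w₂ ∈ ℝ, w₁ > 0, b ∈ ℝ, the pointwise limit as w₁ → ∞ of (w₂/w₁)·FELU(w₁·(x + b)) equals w₂·ReLU(x + b). -/
noncomputable def FELU (x : ℝ) : ℝ :=
  if x > 0 then x else if -1 ≤ x then (x + 1) ^ 2 / 2 - 1 / 2 else -(1 / 2)

/-!
For `t > 0` the argument `w₁ * t` is eventually positive, where `FELU` is the identity, so the
expression is constantly `w₂ * t`. For `t ≤ 0` the argument stays in `(-∞, 0]`, where `FELU` is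
bounded, and the prefactor `w₂ / w₁` tends to `0`.
-/

open Filter Topology

lemma FELU_of_pos {x : ℝ} (hx : 0 < x) : FELU x = x := if_pos hx

lemma abs_FELU_le_of_nonpos {x : ℝ} (hx : x ≤ 0) : |FELU x| ≤ 1 / 2 := by
  unfold FELU
  split_ifs with hpos hge
  · linarith
  · rw [abs_le]
    constructor <;> nlinarith
  · norm_num [abs_of_neg]

theorem tendsto_div_mul_comp_mul_atTop {f : ℝ → ℝ} (hpos : ∀ y, 0 < y → f y = y)
    (hbdd : ∃ C, ∀ y ≤ 0, |f y| ≤ C) (t c : ℝ) :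
    Tendsto (fun w => c / w * f (w * t)) atTop (𝓝 (c * max t 0)) := by
  rcases lt_or_ge 0 t with ht | ht
  · rw [max_eq_left ht.le]
    refine tendsto_const_nhds.congr' ?_
    filter_upwards [eventually_gt_atTop 0] with w hw
    rw [hpos _ (mul_pos hw ht)]
    field_simp
  · rw [max_eq_right ht, mul_zero]
    obtain ⟨C, hC⟩ := hbdd
    have hbounded : IsBoundedUnder (· ≤ ·) atTop (fun w => ‖f (w * t)‖) := by
      refine isBoundedUnder_of_eventually_le (a := C) ?_
      filter_upwards [eventually_ge_atTop 0] with w hw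
      exact hC _ (mul_nonpos_of_nonneg_of_nonpos hw ht)
    exact (tendsto_id.const_div_atTop c).zero_mul_isBoundedUnder_le hbounded

theorem felu_relu_limit (x b w₂ : ℝ) :
    Filter.Tendsto (fun w₁ : ℝ => (w₂ / w₁) * FELU (w₁ * (x + b)))
      Filter.atTop (nhds (w₂ * max (x + b) 0)) :=
  tendsto_div_mul_comp_mul_atTop (fun _ => FELU_of_pos) ⟨1 / 2, fun _ => abs_FELU_le_of_nonpos⟩
    (x + b) w₂
end

section
/- If g : ℝᵈ → ℝᵈ is continuously differentiable and L-Lipschitz with L < 1, and f(x) = x + g(x), then for every x, d·log(1 - L) ≤ log|det(Jf(x))| ≤ d·log(1 + L), where Jf(x) is the Jacobian of f at x. -/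
/-!
The Jacobian of `f = id + g` is `1 + A` with `A = Dg(x)` and `‖A‖ ≤ L`. Comparing volumes of a ball
and its linear image gives `|det T| ≤ ‖T‖ ^ d` for every linear map `T`. Applied to `1 + A` this
is the upper bound `(1 + L) ^ d`; applied to `(1 + A)⁻¹ = ∑ (-A) ^ n`, whose norm is at most
`(1 - L)⁻¹`, it gives the lower bound `(1 - L) ^ d` on `|det (1 + A)|`.
-/

open Module Metric MeasureTheory

theorem Units.norm_oneSub_inv_le {R : Type*} [NormedRing R] [HasSummableGeomSeries R]
    (hR : ‖(1 : R)‖ ≤ 1) (t : R) (h : ‖t‖ < 1) :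
    ‖(↑(Units.oneSub t h)⁻¹ : R)‖ ≤ (1 - ‖t‖)⁻¹ := by
  change ‖∑' n : ℕ, t ^ n‖ ≤ _
  linarith [tsum_geometric_le_of_norm_lt_one t h]

section FiniteDimensional

variable {E : Type*} [NormedAddCommGroup E] [NormedSpace ℝ E] [FiniteDimensional ℝ E]

theorem ContinuousLinearMap.abs_det_le_opNorm_pow (T : E →L[ℝ] E) :
    |T.det| ≤ ‖T‖ ^ finrank ℝ E := by
  borelize E
  let μ : Measure E := Measure.addHaar
  have hsub : T '' closedBall 0 1 ⊆ closedBall 0 ‖T‖ := by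
    rintro _ ⟨y, hy, rfl⟩
    rw [mem_closedBall_zero_iff] at hy ⊢
    simpa using T.le_opNorm_of_le hy
  have hvol : ENNReal.ofReal |T.det| * μ (closedBall 0 1)
      ≤ ENNReal.ofReal (‖T‖ ^ finrank ℝ E) * μ (closedBall 0 1) := by
    rw [← Measure.addHaar_image_continuousLinearMap,
      ← Measure.addHaar_closedBall' μ 0 (norm_nonneg T)]
    exact measure_mono hsub
  rw [ENNReal.mul_le_mul_iff_left (measure_closedBall_pos μ 0 one_pos).ne'
    measure_closedBall_lt_top.ne, ENNReal.ofReal_le_ofReal_iff (by positivity)] at hvol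
  exact hvol

theorem ContinuousLinearMap.abs_det_one_add_le_pow {A : E →L[ℝ] E} {L : ℝ} (hA : ‖A‖ ≤ L) :
    |(1 + A).det| ≤ (1 + L) ^ finrank ℝ E := by
  have hnorm : ‖1 + A‖ ≤ 1 + L :=
    (norm_add_le _ _).trans (add_le_add ContinuousLinearMap.norm_id_le hA)
  exact (1 + A).abs_det_le_opNorm_pow.trans (pow_le_pow_left₀ (norm_nonneg _) hnorm _)

theorem ContinuousLinearMap.pow_le_abs_det_one_add {A : E →L[ℝ] E} {L : ℝ} (hA : ‖A‖ ≤ L)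
    (hL : L < 1) : (1 - L) ^ finrank ℝ E ≤ |(1 + A).det| := by
  have hnA : ‖-A‖ < 1 := by rw [norm_neg]; linarith
  let u := Units.oneSub (-A) hnA
  have hu : (u : E →L[ℝ] E) = 1 + A := by simp [u, sub_neg_eq_add]
  have hinv : ‖(↑u⁻¹ : E →L[ℝ] E)‖ ≤ (1 - L)⁻¹ :=
    (Units.norm_oneSub_inv_le ContinuousLinearMap.norm_id_le (-A) hnA).trans
      (inv_anti₀ (by linarith) (by rw [norm_neg]; linarith))
  have hdet : (u : E →L[ℝ] E).det * (↑u⁻¹ : E →L[ℝ] E).det = 1 := by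
    simp [← map_mul, ← ContinuousLinearMap.toLinearMap_mul]
  have hdet_inv : |(↑u⁻¹ : E →L[ℝ] E).det| ≤ ((1 - L) ^ finrank ℝ E)⁻¹ := by
    rw [← inv_pow]
    exact (ContinuousLinearMap.abs_det_le_opNorm_pow _).trans
      (pow_le_pow_left₀ (norm_nonneg _) hinv _)
  have hpos : 0 < (1 - L) ^ finrank ℝ E := pow_pos (by linarith) _
  have hdet_inv_pos : 0 < |(↑u⁻¹ : E →L[ℝ] E).det| :=
    abs_pos.mpr (right_ne_zero_of_mul_eq_one hdet)
  have habs : |(u : E →L[ℝ] E).det| = |(↑u⁻¹ : E →L[ℝ] E).det|⁻¹ :=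
    eq_inv_of_mul_eq_one_left (by rw [← abs_mul, hdet, abs_one])
  rw [← hu, habs]
  exact (le_inv_comm₀ hpos hdet_inv_pos).mpr hdet_inv

theorem ContinuousLinearMap.log_abs_det_one_add_bounds {A : E →L[ℝ] E} {L : ℝ} (hA : ‖A‖ ≤ L)
    (hL : L < 1) :
    finrank ℝ E * Real.log (1 - L) ≤ Real.log |(1 + A).det| ∧
      Real.log |(1 + A).det| ≤ finrank ℝ E * Real.log (1 + L) := by
  have hlow := pow_le_abs_det_one_add hA hL
  have hpos : 0 < (1 - L) ^ finrank ℝ E := pow_pos (by linarith) _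
  rw [← Real.log_pow, ← Real.log_pow]
  exact ⟨Real.log_le_log hpos hlow,
    Real.log_le_log (hpos.trans_le hlow) (abs_det_one_add_le_pow hA)⟩

end FiniteDimensional

theorem norm_fderiv_le_of_forall_norm_sub_le {E F : Type*} [NormedAddCommGroup E]
    [NormedSpace ℝ E] [Nontrivial E] [NormedAddCommGroup F] [NormedSpace ℝ F] {f : E → F} {C : ℝ}
    (hf : ∀ a b, ‖f a - f b‖ ≤ C * ‖a - b‖) (x : E) : ‖fderiv ℝ f x‖ ≤ C := by
  obtain ⟨v, hv⟩ := exists_ne (0 : E)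
  have hC : 0 ≤ C := by
    have := (norm_nonneg _).trans (hf v 0)
    rw [sub_zero] at this
    exact nonneg_of_mul_nonneg_left this (norm_pos_iff.mpr hv)
  exact norm_fderiv_le_of_lipschitz ℝ (C := ⟨C, hC⟩)
    (LipschitzWith.of_dist_le_mul fun a b => by rw [dist_eq_norm, dist_eq_norm]; exact hf a b)

theorem residual_logdet_bounds {d : ℕ}
    (g : EuclideanSpace ℝ (Fin d) → EuclideanSpace ℝ (Fin d))
    (L : ℝ) (hL1 : L < 1)
    (hgC1 : ContDiff ℝ 1 g)
    (hg : ∀ a b, ‖g a - g b‖ ≤ L * ‖a - b‖) :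
    ∀ x, (d : ℝ) * Real.log (1 - L) ≤
        Real.log |(fderiv ℝ (fun x => x + g x) x).det| ∧
      Real.log |(fderiv ℝ (fun x => x + g x) x).det| ≤ (d : ℝ) * Real.log (1 + L) := by
  intro x
  obtain rfl | hd := d.eq_zero_or_pos
  · simp [LinearMap.det_eq_one_of_subsingleton]
  have : NeZero d := ⟨hd.ne'⟩
  have hJ : fderiv ℝ (fun x => x + g x) x = 1 + fderiv ℝ g x :=
    ((hasFDerivAt_id x).add (hgC1.differentiable one_ne_zero x).hasFDerivAt).fderiv
  rw [hJ]
  simpa only [finrank_euclideanSpace_fin] using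
    ContinuousLinearMap.log_abs_det_one_add_bounds (norm_fderiv_le_of_forall_norm_sub_le hg x) hL1
end

section
/- Let f : ℝ → ℝ be 1-Lipschitz and let [a,b] be a compact interval. For every ε > 0 there exist H ∈ ℕ, weights w ∈ ℝ^H, biases b₁ ∈ ℝ^H, and b₂ ∈ ℝ such that the function ĥ(x) = b₂ + Σᵢ wᵢ·ReLU(x + b₁ᵢ) is 1-Lipschitz and satisfies sup_{x ∈ [a,b]} |f(x) - ĥ(x)| ≤ ε. -/
/-!
Take the piecewise linear interpolant `g` of `f` on a grid of mesh `h = ε / 2` covering `[a, b]`.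
Its slopes are slopes of `f`, hence lie in `[-1, 1]`, and on a mesh cell it is a combination of
`ReLU(x - xᵢ) - ReLU(x - xᵢ₊₁)`, so it is a one-hidden-layer ReLU network. It is `1`-Lipschitz
because its increments are dominated by those of the monotone ramps whose sum is again a
`1`-Lipschitz ramp. Since `f` and `g` are both `1`-Lipschitz and agree at the grid point
`xₖ ≤ x` nearest to `x`, `|f x - g x| ≤ 2 (x - xₖ) < 2h = ε`.
-/

open Finset

theorem LipschitzWith.abs_slope_le {K : NNReal} {f : ℝ → ℝ} (hf : LipschitzWith K f) (x y : ℝ) :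
    |slope f x y| ≤ K := by
  rw [slope_def_field, abs_div]
  exact div_le_of_le_mul₀ (abs_nonneg _) K.2 (hf.dist_le_mul y x)

theorem LipschitzWith.sum_mul_of_monotone {ι : Type*} {s : Finset ι} {K L : NNReal}
    {r : ι → ℝ → ℝ} (hR : LipschitzWith K fun x => ∑ i ∈ s, r i x)
    (hr : ∀ i ∈ s, Monotone (r i)) {w : ι → ℝ} (hw : ∀ i ∈ s, |w i| ≤ L) :
    LipschitzWith (L * K) fun x => ∑ i ∈ s, w i * r i x := by
  refine LipschitzWith.of_dist_le_mul fun x y => ?_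
  wlog hxy : y ≤ x generalizing x y
  · rw [dist_comm, dist_comm x]
    exact this y x (le_of_not_ge hxy)
  have hincr : ∀ i ∈ s, 0 ≤ r i x - r i y := fun i hi => sub_nonneg.2 (hr i hi hxy)
  calc dist (∑ i ∈ s, w i * r i x) (∑ i ∈ s, w i * r i y)
      = |∑ i ∈ s, w i * (r i x - r i y)| := by
        simp only [Real.dist_eq, mul_sub, sum_sub_distrib]
    _ ≤ ∑ i ∈ s, |w i| * (r i x - r i y) := by
        refine (abs_sum_le_sum_abs _ _).trans_eq (sum_congr rfl fun i hi => ?_)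
        rw [abs_mul, abs_of_nonneg (hincr i hi)]
    _ ≤ L * ∑ i ∈ s, (r i x - r i y) := by
        rw [mul_sum]
        exact sum_le_sum fun i hi => mul_le_mul_of_nonneg_right (hw i hi) (hincr i hi)
    _ ≤ L * dist (∑ i ∈ s, r i x) (∑ i ∈ s, r i y) := by
        rw [Real.dist_eq, ← sum_sub_distrib]
        exact mul_le_mul_of_nonneg_left (le_abs_self _) L.2
    _ ≤ L * (K * dist x y) := mul_le_mul_of_nonneg_left (hR.dist_le_mul x y) L.2
    _ = ↑(L * K) * dist x y := by push_cast; ring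

theorem abs_sub_le_of_lipschitzWith_of_eq {α : Type*} [PseudoMetricSpace α] {K : NNReal}
    {f g : α → ℝ} (hf : LipschitzWith K f) (hg : LipschitzWith K g) {x y : α} (hy : f y = g y) :
    |f x - g x| ≤ 2 * K * dist x y := by
  calc |f x - g x| = |(f x - f y) - (g x - g y)| := by rw [hy, sub_sub_sub_cancel_right]
    _ ≤ dist (f x) (f y) + dist (g x) (g y) := abs_sub _ _
    _ ≤ K * dist x y + K * dist x y := add_le_add (hf.dist_le_mul x y) (hg.dist_le_mul x y)
    _ = 2 * K * dist x y := by ring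

def ramp (c t : ℝ) : ℝ := max t 0 - max (t - c) 0

theorem ramp_eq_min_max {c : ℝ} (hc : 0 ≤ c) (t : ℝ) : ramp c t = min (max t 0) c := by
  unfold ramp
  simp only [max_def, min_def]
  split_ifs <;> linarith

theorem ramp_monotone {c : ℝ} (hc : 0 ≤ c) : Monotone (ramp c) := by
  intro s t hst
  simp only [ramp_eq_min_max hc]
  gcongr

theorem lipschitzWith_ramp {c : ℝ} (hc : 0 ≤ c) : LipschitzWith 1 (ramp c) := by
  rw [funext (ramp_eq_min_max hc)]
  exact (LipschitzWith.id.max_const 0).min_const c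

theorem ramp_of_nonpos {c t : ℝ} (hc : 0 ≤ c) (ht : t ≤ 0) : ramp c t = 0 := by
  simp [ramp_eq_min_max hc, ht, hc]

theorem ramp_of_le {c t : ℝ} (hc : 0 ≤ c) (ht : c ≤ t) : ramp c t = c := by
  simp [ramp_eq_min_max hc, ht, hc.trans ht]

theorem sum_range_ramp (h t : ℝ) (n : ℕ) :
    ∑ i ∈ range n, ramp h (t - i * h) = ramp (n * h) t := by
  unfold ramp
  have := sum_range_sub' (fun i : ℕ => max (t - i * h) 0) n
  simp only [Nat.cast_add, Nat.cast_one, Nat.cast_zero, zero_mul, sub_zero] at this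
  rw [← this]
  refine sum_congr rfl fun i _ => ?_
  ring_nf

theorem exists_relu_sum_eq_sum_range_mul_ramp (c p : ℕ → ℝ) (h : ℝ) (n : ℕ) :
    ∃ (H : ℕ) (w b₁ : Fin H → ℝ), ∀ x,
      ∑ i ∈ range n, c i * ramp h (x + p i) = ∑ i, w i * max (x + b₁ i) 0 := by
  refine ⟨n + n, Fin.append (fun i => c i) (fun i => -c i),
    Fin.append (fun i => p i) (fun i => p i - h), fun x => ?_⟩
  simp only [Fin.sum_univ_add, Fin.append_left, Fin.append_right, ← sum_range fun i =>
    c i * max (x + p i) 0, ← sum_range fun i => -c i * max (x + (p i - h)) 0, ← sum_add_distrib]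
  refine sum_congr rfl fun i _ => ?_
  rw [ramp, add_sub_assoc]
  ring

/-- The piecewise linear interpolant of `f` at the nodes `a + i * h`, `i ≤ n`, continued by
constants outside `[a, a + n * h]`. -/
noncomputable def gridInterpolant (f : ℝ → ℝ) (a h : ℝ) (n : ℕ) (x : ℝ) : ℝ :=
  f a + ∑ i ∈ range n, slope f (a + i * h) (a + (i + 1 : ℕ) * h) * ramp h (x - (a + i * h))

theorem gridInterpolant_node (f : ℝ → ℝ) (a : ℝ) {h : ℝ} (hh : 0 ≤ h) {k n : ℕ} (hk : k ≤ n) :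
    gridInterpolant f a h n (a + k * h) = f (a + k * h) := by
  have hbelow : ∀ i ∈ range k, slope f (a + i * h) (a + (i + 1 : ℕ) * h) *
      ramp h (a + k * h - (a + i * h)) = f (a + (i + 1 : ℕ) * h) - f (a + i * h) := by
    intro i hi
    have hik : (i + 1 : ℝ) ≤ k := by exact_mod_cast mem_range.1 hi
    have hstep := sub_smul_slope f (a + i * h) (a + (i + 1 : ℕ) * h)
    rw [vsub_eq_sub, smul_eq_mul] at hstep
    rw [ramp_of_le hh (by nlinarith), ← hstep]
    push_cast
    ring
  have habove : ∀ i ∈ Ico k n, slope f (a + i * h) (a + (i + 1 : ℕ) * h) *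
      ramp h (a + k * h - (a + i * h)) = 0 := by
    intro i hi
    have hki : (k : ℝ) ≤ i := by exact_mod_cast (mem_Ico.1 hi).1
    rw [ramp_of_nonpos hh (by nlinarith), mul_zero]
  rw [gridInterpolant, ← sum_range_add_sum_Ico _ hk, sum_congr rfl hbelow, sum_eq_zero habove,
    sum_range_sub fun i : ℕ => f (a + i * h)]
  simp

theorem lipschitzWith_gridInterpolant {K : NNReal} {f : ℝ → ℝ} (hf : LipschitzWith K f) (a : ℝ)
    {h : ℝ} (hh : 0 ≤ h) (n : ℕ) : LipschitzWith K (gridInterpolant f a h n) := by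
  have hramps : LipschitzWith 1 fun x => ∑ i ∈ range n, ramp h (x - (a + i * h)) := by
    simp only [← sub_sub, sum_range_ramp]
    simpa [Function.comp_def] using
      (lipschitzWith_ramp (by positivity)).comp (LipschitzWith.id.sub (LipschitzWith.const a))
  have hsum := hramps.sum_mul_of_monotone (fun i _ x y hxy => ramp_monotone hh (sub_le_sub_right hxy _))
    (fun i _ => hf.abs_slope_le (a + i * h) (a + (i + 1 : ℕ) * h))
  refine LipschitzWith.of_dist_le_mul fun x y => ?_
  simpa only [gridInterpolant, dist_add_left, mul_one] using hsum.dist_le_mul x y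

theorem exists_nat_le_ceil_dist_lt {a b h x : ℝ} (hh : 0 < h) (hx : x ∈ Set.Icc a b) :
    ∃ k ≤ ⌈(b - a) / h⌉₊, dist x (a + k * h) < h := by
  have hxa : 0 ≤ (x - a) / h := div_nonneg (sub_nonneg.2 hx.1) hh.le
  refine ⟨⌊(x - a) / h⌋₊, ?_, ?_⟩
  · exact Nat.floor_le_ceil _ |>.trans' (Nat.floor_mono (by gcongr; exact hx.2))
  · rw [Real.dist_eq, abs_of_nonneg]
    · have := Nat.lt_floor_add_one ((x - a) / h)
      rw [div_lt_iff₀ hh] at this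
      linarith
    · have := Nat.floor_le hxa
      rw [le_div_iff₀ hh] at this
      linarith

theorem abs_sub_gridInterpolant_le {K : NNReal} {f : ℝ → ℝ} (hf : LipschitzWith K f) {a b h x : ℝ}
    (hh : 0 < h) (hx : x ∈ Set.Icc a b) :
    |f x - gridInterpolant f a h ⌈(b - a) / h⌉₊ x| ≤ 2 * K * h := by
  obtain ⟨k, hk, hdist⟩ := exists_nat_le_ceil_dist_lt hh hx
  calc |f x - gridInterpolant f a h ⌈(b - a) / h⌉₊ x|
      ≤ 2 * K * dist x (a + k * h) :=
        abs_sub_le_of_lipschitzWith_of_eq hf (lipschitzWith_gridInterpolant hf a hh.le _)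
          (gridInterpolant_node f a hh.le hk).symm
    _ ≤ 2 * K * h := by gcongr

theorem exists_relu_network_eq_gridInterpolant (f : ℝ → ℝ) (a h : ℝ) (n : ℕ) :
    ∃ (H : ℕ) (w b₁ : Fin H → ℝ),
      gridInterpolant f a h n = fun x => f a + ∑ i, w i * max (x + b₁ i) 0 := by
  obtain ⟨H, w, b₁, hnet⟩ := exists_relu_sum_eq_sum_range_mul_ramp
    (fun i => slope f (a + i * h) (a + (i + 1 : ℕ) * h)) (fun i => -(a + i * h)) h n
  refine ⟨H, w, b₁, funext fun x => ?_⟩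
  rw [gridInterpolant, ← hnet]
  simp only [sub_eq_add_neg]

theorem relu_universal_lipschitz_general (f : ℝ → ℝ) (hf : LipschitzWith 1 f) (a b : ℝ) :
    ∀ ε > (0 : ℝ), ∃ (H : ℕ) (w b₁ : Fin H → ℝ) (b₂ : ℝ),
      LipschitzWith 1 (fun x => b₂ + ∑ i, w i * max (x + b₁ i) 0) ∧
      ∀ x ∈ Set.Icc a b, |f x - (b₂ + ∑ i, w i * max (x + b₁ i) 0)| ≤ ε := by
  intro ε hε
  obtain ⟨H, w, b₁, hnet⟩ :=
    exists_relu_network_eq_gridInterpolant f a (ε / 2) ⌈(b - a) / (ε / 2)⌉₊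
  refine ⟨H, w, b₁, f a, hnet ▸ lipschitzWith_gridInterpolant hf a (by positivity) _,
    fun x hx => ?_⟩
  rw [← congrFun hnet x]
  simpa [mul_div_cancel₀] using abs_sub_gridInterpolant_le hf (half_pos hε) hx

theorem relu_universal_lipschitz (f : ℝ → ℝ) (hf : LipschitzWith 1 f) (a b : ℝ) (hab : a ≤ b) :
    ∀ ε > (0 : ℝ), ∃ (H : ℕ) (w b₁ : Fin H → ℝ) (b₂ : ℝ),
      LipschitzWith 1 (fun x => b₂ + ∑ i, w i * max (x + b₁ i) 0) ∧
      ∀ x ∈ Set.Icc a b, |f x - (b₂ + ∑ i, w i * max (x + b₁ i) 0)| ≤ ε :=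
  relu_universal_lipschitz_general f hf a b
end

section
/- Let f : ℝ → ℝ be 1-Lipschitz and let [a,b] be a compact interval. For every ε > 0 there exist H ∈ ℕ and parameters w₁, w₂, b₁ ∈ ℝ^H, b₂ ∈ ℝ such that the function ĥ(x) = b₂ + Σᵢ w₂ᵢ·FELU(w₁ᵢ·x + b₁ᵢ) is 1-Lipschitz and satisfies sup_{x ∈ [a,b]} |f(x) - ĥ(x)| ≤ ε. -/
open Set Filter Topology

theorem HasDerivAt.of_nhdsLE_of_nhdsGE {f g h : ℝ → ℝ} {p d : ℝ} (hg : HasDerivAt g d p)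
    (hh : HasDerivAt h d p) (hfg : f =ᶠ[𝓝[≤] p] g) (hfh : f =ᶠ[𝓝[≥] p] h) :
    HasDerivAt f d p := by
  have hle := hg.hasDerivWithinAt.congr_of_eventuallyEq_of_mem hfg self_mem_Iic
  have hge := hh.hasDerivWithinAt.congr_of_eventuallyEq_of_mem hfh self_mem_Ici
  simpa only [Iic_union_Ici, hasDerivWithinAt_univ] using hle.union hge

lemma FELU_of_le_neg_one {x : ℝ} (hx : x ≤ -1) : FELU x = -(1 / 2) := by
  rcases hx.lt_or_eq with hx | rfl
  · simp [FELU, hx.not_ge, (hx.trans (by norm_num : (-1 : ℝ) < 0)).not_gt]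
  · norm_num [FELU]

lemma FELU_of_mem_Icc {x : ℝ} (hx : x ∈ Icc (-1) 0) : FELU x = (x + 1) ^ 2 / 2 - 1 / 2 := by
  simp [FELU, hx.1, hx.2.not_gt]

lemma FELU_of_nonneg {x : ℝ} (hx : 0 ≤ x) : FELU x = x := by
  rcases hx.lt_or_eq with hx | rfl
  · simp [FELU, hx]
  · norm_num [FELU]

noncomputable def feluDeriv (x : ℝ) : ℝ := max 0 (min (x + 1) 1)

lemma feluDeriv_of_le_neg_one {x : ℝ} (hx : x ≤ -1) : feluDeriv x = 0 :=
  max_eq_left (min_le_of_left_le (by linarith))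

lemma feluDeriv_of_mem_Icc {x : ℝ} (hx : x ∈ Icc (-1) 0) : feluDeriv x = x + 1 := by
  rw [feluDeriv, min_eq_left (by linarith [hx.2]), max_eq_right (by linarith [hx.1])]

lemma feluDeriv_of_nonneg {x : ℝ} (hx : 0 ≤ x) : feluDeriv x = 1 := by
  rw [feluDeriv, min_eq_right (by linarith), max_eq_right zero_le_one]

lemma hasDerivAt_FELU_quadratic (x : ℝ) :
    HasDerivAt (fun y : ℝ => (y + 1) ^ 2 / 2 - 1 / 2) (x + 1) x := by
  simpa using ((((hasDerivAt_id' x).add_const 1).pow 2).div_const 2).sub_const (1 / 2)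

theorem hasDerivAt_FELU (x : ℝ) : HasDerivAt FELU (feluDeriv x) x := by
  rcases lt_trichotomy x (-1) with hx | rfl | hx
  · rw [feluDeriv_of_le_neg_one hx.le]
    exact (hasDerivAt_const x _).congr_of_eventuallyEq
      (eventuallyEq_of_mem (Iio_mem_nhds hx) fun y hy => FELU_of_le_neg_one (le_of_lt hy))
  · rw [feluDeriv_of_le_neg_one le_rfl]
    exact HasDerivAt.of_nhdsLE_of_nhdsGE (hasDerivAt_const _ (-(1 / 2)))
      (by simpa using hasDerivAt_FELU_quadratic (-1))
      (eventuallyEq_of_mem self_mem_nhdsWithin fun y hy => FELU_of_le_neg_one hy)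
      (eventuallyEq_of_mem (Icc_mem_nhdsGE (by norm_num)) fun y hy => FELU_of_mem_Icc hy)
  rcases lt_trichotomy x 0 with hx0 | rfl | hx0
  · rw [feluDeriv_of_mem_Icc ⟨hx.le, hx0.le⟩]
    exact (hasDerivAt_FELU_quadratic x).congr_of_eventuallyEq <| eventuallyEq_of_mem
      (Ioo_mem_nhds hx hx0) fun y hy => FELU_of_mem_Icc (Ioo_subset_Icc_self hy)
  · rw [feluDeriv_of_nonneg le_rfl]
    exact HasDerivAt.of_nhdsLE_of_nhdsGE (by simpa using hasDerivAt_FELU_quadratic 0)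
      (hasDerivAt_id' 0)
      (eventuallyEq_of_mem (Icc_mem_nhdsLE (by norm_num)) fun y hy => FELU_of_mem_Icc hy)
      (eventuallyEq_of_mem self_mem_nhdsWithin fun y hy => FELU_of_nonneg hy)
  · rw [feluDeriv_of_nonneg hx0.le]
    exact (hasDerivAt_id' x).congr_of_eventuallyEq
      (eventuallyEq_of_mem (Ioi_mem_nhds hx0) fun y hy => FELU_of_nonneg (le_of_lt hy))

lemma feluDeriv_mono : Monotone feluDeriv := fun _ _ h =>
  max_le_max le_rfl (min_le_min (by linarith) le_rfl)

lemma feluDeriv_nonneg (x : ℝ) : 0 ≤ feluDeriv x := le_max_left _ _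

lemma feluDeriv_le_one (x : ℝ) : feluDeriv x ≤ 1 := max_le zero_le_one (min_le_right _ _)

lemma abs_FELU_sub_max_le (x : ℝ) : |FELU x - max x 0| ≤ 1 / 2 := by
  rcases le_total x (-1) with hx | hx
  · rw [FELU_of_le_neg_one hx, max_eq_right (by linarith), abs_le]; norm_num
  rcases le_total x 0 with hx0 | hx0
  · rw [FELU_of_mem_Icc ⟨hx, hx0⟩, max_eq_right hx0, abs_le]; constructor <;> nlinarith
  · rw [FELU_of_nonneg hx0, max_eq_left hx0]; norm_num

lemma abs_mul_FELU_div_sub_max_le {τ : ℝ} (hτ : 0 < τ) (t : ℝ) :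
    |τ * FELU (t / τ) - max t 0| ≤ τ / 2 := by
  have hmax : max t 0 = τ * max (t / τ) 0 := by
    rw [mul_max_of_nonneg _ _ hτ.le, mul_div_cancel₀ _ hτ.ne', mul_zero]
  rw [hmax, ← mul_sub, abs_mul, abs_of_pos hτ]
  linarith [mul_le_mul_of_nonneg_left (abs_FELU_sub_max_le (t / τ)) hτ.le]

lemma hasDerivAt_mul_FELU_div {τ : ℝ} (hτ : τ ≠ 0) (c x : ℝ) :
    HasDerivAt (fun y => τ * FELU ((y - c) / τ)) (feluDeriv ((x - c) / τ)) x := by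
  have h := ((hasDerivAt_FELU _).comp x (((hasDerivAt_id' x).sub_const c).div_const τ)).const_mul τ
  exact h.congr_deriv (by field_simp)

open Finset NNReal

theorem sum_range_sub_mul_eq (s θ : ℕ → ℝ) (n : ℕ) :
    ∑ i ∈ range n, (s (i + 1) - s i) * θ i
      = ∑ i ∈ range n, s (i + 1) * (θ i - θ (i + 1)) + s n * θ n - s 0 * θ 0 := by
  induction n with
  | zero => simp
  | succ m ih =>
    rw [sum_range_succ, sum_range_succ, ih]
    ring

theorem abs_sum_range_sub_mul_le {s θ : ℕ → ℝ} {M : ℝ} (n : ℕ) (hs0 : s 0 = 0)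
    (hs : ∀ k, |s k| ≤ M) (hθ : Antitone θ) (hθ0 : ∀ i, 0 ≤ θ i) :
    |∑ i ∈ range n, (s (i + 1) - s i) * θ i| ≤ M * θ 0 := by
  have hterm (k : ℕ) {t : ℝ} (ht : 0 ≤ t) : |s k * t| ≤ M * t := by
    rw [abs_mul, abs_of_nonneg ht]
    exact mul_le_mul_of_nonneg_right (hs k) ht
  rw [sum_range_sub_mul_eq, hs0, zero_mul, sub_zero]
  calc _ ≤ ∑ i ∈ range n, |s (i + 1) * (θ i - θ (i + 1))| + |s n * θ n| :=
        (abs_add_le _ _).trans (add_le_add_left (abs_sum_le_sum_abs _ _) _)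
    _ ≤ ∑ i ∈ range n, M * (θ i - θ (i + 1)) + M * θ n :=
        add_le_add (sum_le_sum fun i _ => hterm _ (sub_nonneg.2 (hθ i.le_succ)))
          (hterm _ (hθ0 n))
    _ = M * θ 0 := by
        rw [← mul_sum, sum_range_sub' θ n]
        ring

noncomputable def cellSlope (f : ℝ → ℝ) (X : ℕ → ℝ) : ℕ → ℝ
  | 0 => 0
  | k + 1 => slope f (X k) (X (k + 1))

section Interpolation

variable (f : ℝ → ℝ) (X : ℕ → ℝ)

lemma cellSlope_succ_mul (k : ℕ) :
    cellSlope f X (k + 1) * (X (k + 1) - X k) = f (X (k + 1)) - f (X k) := by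
  simpa [cellSlope, mul_comm] using sub_smul_slope f (X k) (X (k + 1))

lemma abs_cellSlope_le {f : ℝ → ℝ} {K : ℝ≥0} (hf : LipschitzWith K f) (k : ℕ) :
    |cellSlope f X k| ≤ K := by
  cases k with
  | zero => simp [cellSlope]
  | succ k =>
    rw [cellSlope, slope_def_field, abs_div]
    exact div_le_of_le_mul₀ (abs_nonneg _) K.2
      (by simpa [Real.dist_eq] using hf.dist_le_mul (X (k + 1)) (X k))

lemma sum_range_cellSlope_mul (t : ℝ) (m : ℕ) :
    ∑ i ∈ range m, (cellSlope f X (i + 1) - cellSlope f X i) * (t - X i)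
      = cellSlope f X m * (t - X m) + (f (X m) - f (X 0)) := by
  induction m with
  | zero => simp [cellSlope]
  | succ m ih =>
    rw [sum_range_succ, ih]
    linear_combination cellSlope_succ_mul f X m

/-- The piecewise linear interpolant of `f` at the nodes `X 0, …, X n`, written with ReLUs. -/
noncomputable def reluInterpolant (n : ℕ) (x : ℝ) : ℝ :=
  f (X 0) + ∑ i ∈ range n, (cellSlope f X (i + 1) - cellSlope f X i) * max (x - X i) 0

noncomputable def feluNetwork (n : ℕ) (τ x : ℝ) : ℝ :=
  f (X 0) + ∑ i ∈ range n, (cellSlope f X (i + 1) - cellSlope f X i) * (τ * FELU ((x - X i) / τ))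

lemma reluInterpolant_node {X : ℕ → ℝ} (hX : Monotone X) {j n : ℕ} (hj : j ≤ n) :
    reluInterpolant f X n (X j) = f (X j) := by
  have hsum : ∑ i ∈ range n, (cellSlope f X (i + 1) - cellSlope f X i) * max (X j - X i) 0
      = ∑ i ∈ range j, (cellSlope f X (i + 1) - cellSlope f X i) * (X j - X i) := by
    rw [← sum_range_add_sum_Ico _ hj, sum_eq_zero (s := Ico j n) fun i hi => by
      rw [max_eq_right (sub_nonpos.2 (hX (Finset.mem_Ico.1 hi).1)), mul_zero], add_zero]
    exact sum_congr rfl fun i hi => by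
      rw [max_eq_left (sub_nonneg.2 (hX (mem_range.1 hi).le))]
  rw [reluInterpolant, hsum, sum_range_cellSlope_mul, sub_self, mul_zero]
  ring

lemma abs_feluNetwork_sub_reluInterpolant_le {f : ℝ → ℝ} {K : ℝ≥0} (hf : LipschitzWith K f)
    (n : ℕ) {τ : ℝ} (hτ : 0 < τ) (x : ℝ) :
    |feluNetwork f X n τ x - reluInterpolant f X n x| ≤ n * K * τ := by
  rw [feluNetwork, reluInterpolant, add_sub_add_left_eq_sub, ← sum_sub_distrib]
  calc _ ≤ ∑ i ∈ range n, |(cellSlope f X (i + 1) - cellSlope f X i) * (τ * FELU ((x - X i) / τ))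
          - (cellSlope f X (i + 1) - cellSlope f X i) * max (x - X i) 0| := abs_sum_le_sum_abs _ _
    _ ≤ ∑ _i ∈ range n, (K + K) * (τ / 2) := sum_le_sum fun i _ => by
        rw [← mul_sub, abs_mul]
        exact mul_le_mul ((abs_sub _ _).trans (add_le_add (abs_cellSlope_le X hf _)
          (abs_cellSlope_le X hf _))) (abs_mul_FELU_div_sub_max_le hτ _) (abs_nonneg _)
          (by positivity)
    _ = n * K * τ := by
        rw [sum_const, card_range, nsmul_eq_mul]
        ring

lemma hasDerivAt_feluNetwork (n : ℕ) {τ : ℝ} (hτ : τ ≠ 0) (x : ℝ) :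
    HasDerivAt (feluNetwork f X n τ)
      (∑ i ∈ range n, (cellSlope f X (i + 1) - cellSlope f X i) * feluDeriv ((x - X i) / τ)) x :=
  (HasDerivAt.fun_sum fun i _ => (hasDerivAt_mul_FELU_div hτ (X i) x).const_mul _).const_add _

lemma feluNetwork_eq_sum_fin (n : ℕ) (τ x : ℝ) :
    f (X 0) + ∑ i : Fin n, τ * (cellSlope f X (i + 1) - cellSlope f X i)
      * FELU (τ⁻¹ * x + -X i / τ) = feluNetwork f X n τ x := by
  rw [feluNetwork, ← Fin.sum_univ_eq_sum_range]
  congr 1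
  refine Fintype.sum_congr _ _ fun i => ?_
  rw [show τ⁻¹ * x + -X i / τ = (x - X i) / τ by ring]
  ring

/-- Abel summation turns the derivative into a combination of the cell slopes with nonnegative
weights of total mass at most one, because `feluDeriv` is monotone with values in `[0, 1]`. -/
theorem lipschitzWith_feluNetwork {f : ℝ → ℝ} {X : ℕ → ℝ} {K : ℝ≥0} (hf : LipschitzWith K f)
    (hX : Monotone X) (n : ℕ) {τ : ℝ} (hτ : 0 < τ) : LipschitzWith K (feluNetwork f X n τ) := by
  refine lipschitzWith_of_nnnorm_deriv_le
    (fun x => (hasDerivAt_feluNetwork f X n hτ.ne' x).differentiableAt) fun x => ?_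
  rw [← NNReal.coe_le_coe, coe_nnnorm, Real.norm_eq_abs,
    (hasDerivAt_feluNetwork f X n hτ.ne' x).deriv]
  have hθ : Antitone fun i => feluDeriv ((x - X i) / τ) := fun i j hij =>
    feluDeriv_mono (div_le_div_of_nonneg_right (sub_le_sub_left (hX hij) x) hτ.le)
  calc _ ≤ K * feluDeriv ((x - X 0) / τ) :=
        abs_sum_range_sub_mul_le n rfl (abs_cellSlope_le X hf) hθ fun i => feluDeriv_nonneg _
    _ ≤ K := mul_le_of_le_one_right K.2 (feluDeriv_le_one _)

end Interpolation

lemma exists_abs_sub_node_le {X : ℕ → ℝ} {δ : ℝ} (hδ : 0 ≤ δ) (hstep : ∀ k, X (k + 1) - X k ≤ δ)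
    {n : ℕ} {x : ℝ} (hx : x ∈ Icc (X 0) (X n)) : ∃ j ≤ n, |x - X j| ≤ δ := by
  induction n with
  | zero => exact ⟨0, le_rfl, by rw [le_antisymm hx.2 hx.1, sub_self, abs_zero]; exact hδ⟩
  | succ n ih =>
    rcases le_or_gt x (X n) with hxn | hxn
    · obtain ⟨j, hj, hxj⟩ := ih ⟨hx.1, hxn⟩
      exact ⟨j, hj.trans n.le_succ, hxj⟩
    · refine ⟨n, n.le_succ, ?_⟩
      rw [abs_of_pos (sub_pos.2 hxn)]
      linarith [hx.2, hstep n]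

theorem abs_sub_feluNetwork_le {f : ℝ → ℝ} {X : ℕ → ℝ} {K : ℝ≥0} {δ τ : ℝ}
    (hf : LipschitzWith K f) (hX : Monotone X) (hstep : ∀ k, X (k + 1) - X k ≤ δ) (hτ : 0 < τ)
    {n : ℕ} {x : ℝ} (hx : x ∈ Icc (X 0) (X n)) :
    |f x - feluNetwork f X n τ x| ≤ K * (2 * δ + n * τ) := by
  have lip {g : ℝ → ℝ} (hg : LipschitzWith K g) (u v : ℝ) : |g u - g v| ≤ K * |u - v| := by
    simpa [Real.dist_eq] using hg.dist_le_mul u v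
  have hδ : 0 ≤ δ := (sub_nonneg.2 (hX (Nat.le_succ 0))).trans (hstep 0)
  obtain ⟨j, hjn, hxj⟩ := exists_abs_sub_node_le hδ hstep hx
  have hxj' : |X j - x| ≤ δ := abs_sub_comm x (X j) ▸ hxj
  calc |f x - feluNetwork f X n τ x|
      = |(f x - f (X j)) + (reluInterpolant f X n (X j) - feluNetwork f X n τ (X j))
          + (feluNetwork f X n τ (X j) - feluNetwork f X n τ x)| := by
        rw [reluInterpolant_node f hX hjn]
        ring_nf
    _ ≤ |f x - f (X j)| + |reluInterpolant f X n (X j) - feluNetwork f X n τ (X j)|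
          + |feluNetwork f X n τ (X j) - feluNetwork f X n τ x| := abs_add_three _ _ _
    _ ≤ K * δ + n * K * τ + K * δ := by
        gcongr
        · exact (lip hf _ _).trans (by gcongr)
        · rw [abs_sub_comm]
          exact abs_feluNetwork_sub_reluInterpolant_le X hf n hτ _
        · exact (lip (lipschitzWith_feluNetwork hf hX n hτ) _ _).trans (by gcongr)
    _ = K * (2 * δ + n * τ) := by ring

theorem felu_universal_lipschitz (f : ℝ → ℝ) (hf : LipschitzWith 1 f) (a b : ℝ) (hab : a ≤ b) :
    ∀ ε > (0 : ℝ), ∃ (H : ℕ) (w₁ w₂ b₁ : Fin H → ℝ) (b₂ : ℝ),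
      LipschitzWith 1 (fun x => b₂ + ∑ i, w₂ i * FELU (w₁ i * x + b₁ i)) ∧
      ∀ x ∈ Set.Icc a b, |f x - (b₂ + ∑ i, w₂ i * FELU (w₁ i * x + b₁ i))| ≤ ε := by
  intro ε hε
  set n : ℕ := ⌈4 * (b - a) / ε⌉₊ + 1
  have hn : (0 : ℝ) < n := by positivity
  set δ := (b - a) / n
  set τ := ε / (2 * n)
  set X : ℕ → ℝ := fun k => a + k * δ
  have hτ : 0 < τ := by positivity
  have hX : Monotone X := fun i j hij => by
    have : 0 ≤ δ := div_nonneg (sub_nonneg.2 hab) hn.le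
    simp only [X]
    gcongr
  have hXn : X n = b := by simp only [X, δ]; field_simp; ring
  refine ⟨n, fun _ => τ⁻¹, fun i => τ * (cellSlope f X (i + 1) - cellSlope f X i),
    fun i => -X i / τ, f (X 0), ?_⟩
  simp only [feluNetwork_eq_sum_fin]
  refine ⟨lipschitzWith_feluNetwork hf hX n hτ, fun x hx => ?_⟩
  have hδ : 4 * δ ≤ ε := by
    have : 4 * (b - a) / ε ≤ n := (Nat.le_ceil _).trans (by exact_mod_cast Nat.le_succ _)
    rw [div_le_iff₀ hε] at this
    rw [← mul_div_assoc, div_le_iff₀ hn]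
    linarith
  have hτn : n * τ = ε / 2 := by
    simp only [τ]
    field_simp
  calc _ ≤ (1 : ℝ≥0) * (2 * δ + n * τ) := abs_sub_feluNetwork_le hf hX (fun k => le_of_eq (by
          simp only [X]; push_cast; ring)) hτ (by simpa [X, hXn] using hx)
    _ ≤ ε := by
        rw [NNReal.coe_one, one_mul, hτn]
        linarith
end
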